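/- Let π : X → Y be a Γ-equivariant continuous surjection of minimal compact metric Γ-systems admitting a continuous Γ-equivariant section y ↦ λ_y ∈ M(X) with π*(λ_y)=δ_y. Let Y* ⊆ 2^X and π* : X* → Y* be the associated O-shadow diagram (X* = {(x,y*) : x ∈ y* ∈ Y*}, with θ : Y* → Y sending y* to the y with y* ⊆ π⁻¹(y)). Then supp(λ_{θ(y*)}) ⊆ y* for every y* ∈ Y*, and the map y* ↦ λ_{θ(y*)} × δ_{y*} is a continuous Γ-equivariant section for π*; in particular π* is also a RIM extension. -/
import Mathlib


open MeasureTheory TopologicalSpace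

/-- The support of a Borel measure: points all of whose open neighborhoods have
positive measure. -/
def msupport {X : Type*} [TopologicalSpace X] [MeasurableSpace X]
    (μ : MeasureTheory.Measure X) : Set X :=
  {x : X | ∀ U : Set X, IsOpen U → x ∈ U → 0 < μ U}

/-- The action of a group element on the hyperspace of nonempty compact subsets,
by taking images. -/
noncomputable def csmul {Γ X : Type*} [Group Γ] [TopologicalSpace X]
    [MulAction Γ X] [ContinuousConstSMul Γ X]
    (γ : Γ) (A : NonemptyCompacts X) : NonemptyCompacts X :=
  ⟨⟨(fun x => γ • x) '' (A : Set X),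
      A.toCompacts.isCompact'.image (continuous_const_smul γ)⟩,
    A.nonempty'.image _⟩

open Metric Filter Topology BoundedContinuousFunction

section Aux

variable {Γ X : Type*} [Group Γ] [MetricSpace X] [CompactSpace X]
    [MulAction Γ X] [ContinuousConstSMul Γ X]

lemma hausdorffEdist_ne_top_aux (s t : NonemptyCompacts X) :
    EMetric.hausdorffEdist (s : Set X) (t : Set X) ≠ ⊤ :=
  hausdorffEdist_ne_top_of_nonempty_of_bounded s.nonempty t.nonempty
    s.isCompact.isBounded t.isCompact.isBounded

lemma csmul_coe (γ : Γ) (A : NonemptyCompacts X) :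
    (csmul γ A : Set X) = (fun x => γ • x) '' (A : Set X) := rfl

lemma csmul_continuous (γ : Γ) : Continuous (csmul (X := X) γ) := by
  have hu : UniformContinuous (fun x : X => γ • x) :=
    CompactSpace.uniformContinuous_of_continuous (continuous_const_smul γ)
  rw [Metric.continuous_iff]
  intro A ε hε
  obtain ⟨δ, hδpos, hδ⟩ := Metric.uniformContinuous_iff.mp hu (ε / 2) (by positivity)
  refine ⟨δ, hδpos, fun B hB => ?_⟩
  rw [NonemptyCompacts.dist_eq] at hB ⊢
  have key : ∀ s t : NonemptyCompacts X, hausdorffDist (s : Set X) (t : Set X) < δ →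
      ∀ x ∈ (s : Set X), ∃ y ∈ (t : Set X), dist (γ • x) (γ • y) ≤ ε / 2 := by
    intro s t hst x hx
    obtain ⟨y, hy, hxy⟩ := exists_dist_lt_of_hausdorffDist_lt hx hst
      (hausdorffEdist_ne_top_aux s t)
    exact ⟨y, hy, (hδ hxy).le⟩
  have hmain : hausdorffDist (csmul γ B : Set X) (csmul γ A : Set X) ≤ ε / 2 := by
    apply hausdorffDist_le_of_mem_dist (by positivity)
    · rintro _ ⟨x, hx, rfl⟩
      obtain ⟨y, hy, h⟩ := key B A hB x hx
      exact ⟨γ • y, Set.mem_image_of_mem _ hy, h⟩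
    · rintro _ ⟨x, hx, rfl⟩
      obtain ⟨y, hy, h⟩ := key A B (by rwa [hausdorffDist_comm]) x hx
      exact ⟨γ • y, Set.mem_image_of_mem _ hy, by simpa [dist_comm] using h⟩
  linarith

lemma isClosed_memSet : IsClosed {q : X × NonemptyCompacts X | q.1 ∈ (q.2 : Set X)} := by
  apply IsSeqClosed.isClosed
  intro u q hu hq
  have hclosed : IsClosed (q.2 : Set X) := q.2.isCompact.isClosed
  rw [Set.mem_setOf_eq, hclosed.mem_iff_infDist_zero q.2.nonempty]
  refine le_antisymm ?_ infDist_nonneg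
  have key : ∀ n, infDist q.1 (q.2 : Set X) ≤ 2 * dist (u n) q := by
    intro n
    have e0 : infDist (u n).1 ((u n).2 : Set X) = 0 := infDist_zero_of_mem (hu n)
    have e1 : infDist q.1 ((u n).2 : Set X) ≤
        infDist (u n).1 ((u n).2 : Set X) + dist q.1 (u n).1 := infDist_le_infDist_add_dist
    have e2 : infDist q.1 (q.2 : Set X) ≤ infDist q.1 ((u n).2 : Set X) +
        hausdorffDist ((u n).2 : Set X) (q.2 : Set X) :=
      infDist_le_infDist_add_hausdorffDist (hausdorffEdist_ne_top_aux _ _)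
    have e3 : dist q.1 (u n).1 ≤ dist (u n) q := by
      rw [dist_comm q.1 (u n).1, Prod.dist_eq]; exact le_max_left _ _
    have e4 : hausdorffDist ((u n).2 : Set X) (q.2 : Set X) ≤ dist (u n) q := by
      rw [Prod.dist_eq]
      exact le_trans (le_of_eq (NonemptyCompacts.dist_eq).symm) (le_max_right _ _)
    linarith
  have htend : Tendsto (fun n => 2 * dist (u n) q) atTop (𝓝 0) := by
    have := tendsto_iff_dist_tendsto_zero.mp hq
    simpa using this.const_mul (2 : ℝ)
  exact ge_of_tendsto' htend key

end Aux

/-- For a RIM extension `π : X → Y` of minimal compact metric `Γ`-systems with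
continuous equivariant section `y ↦ λ_y`, in the associated O-shadow diagram
(`Y* ⊆ 2^X`, `X* = {(x,y*) : x ∈ y* ∈ Y*}`, `π* = pr₂`, `θ : Y* → Y`),
one has `supp(λ_{θ(y*)}) ⊆ y*` for all `y* ∈ Y*`, and
`y* ↦ λ_{θ(y*)} × δ_{y*}` is a continuous `Γ`-equivariant section for `π*`;
in particular `π*` is also a RIM extension. -/
theorem stmt_19 {Γ X Y : Type*} [Group Γ]
    [MetricSpace X] [CompactSpace X] [MetricSpace Y] [CompactSpace Y]
    [MeasurableSpace X] [BorelSpace X] [MeasurableSpace Y] [BorelSpace Y]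
    [MeasurableSpace (NonemptyCompacts X)] [BorelSpace (NonemptyCompacts X)]
    [MulAction Γ X] [ContinuousConstSMul Γ X]
    [MulAction Γ Y] [ContinuousConstSMul Γ Y]
    (hminX : ∀ x : X, Dense (MulAction.orbit Γ x))
    (hminY : ∀ y : Y, Dense (MulAction.orbit Γ y))
    (π : X → Y) (hc : Continuous π) (hs : Function.Surjective π)
    (heq : ∀ (γ : Γ) (x : X), π (γ • x) = γ • π x)
    (lam : Y → ProbabilityMeasure X) (hlam : Continuous lam)
    (hlameq : ∀ (γ : Γ) (y : Y),
      (lam (γ • y) : Measure X) = (lam y : Measure X).map (fun x => γ • x))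
    (hsec : ∀ y : Y, (lam y : Measure X).map π = Measure.dirac y)
    -- the O-shadow diagram
    (fib : Y → NonemptyCompacts X) (hfib : ∀ y, (fib y : Set X) = π ⁻¹' {y})
    (Y₀ : Set Y) (hY₀ : Y₀ = {y : Y | ContinuousAt fib y})
    (Ystar : Set (NonemptyCompacts X)) (hYstar : Ystar = closure (fib '' Y₀))
    (Xstar : Set (X × NonemptyCompacts X))
    (hXstar : Xstar =
      {q : X × NonemptyCompacts X | q.2 ∈ Ystar ∧ q.1 ∈ (q.2 : Set X)})
    (θ : NonemptyCompacts X → Y)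
    (hθ : ∀ A ∈ Ystar, (A : Set X) ⊆ π ⁻¹' {θ A}) :
    (∀ A ∈ Ystar, msupport (lam (θ A) : Measure X) ⊆ (A : Set X)) ∧
    ∃ s : NonemptyCompacts X → ProbabilityMeasure (X × NonemptyCompacts X),
      (∀ A : NonemptyCompacts X,
        (s A : Measure (X × NonemptyCompacts X)) =
          (lam (θ A) : Measure X).prod (Measure.dirac A)) ∧
      ContinuousOn s Ystar ∧
      (∀ (γ : Γ), ∀ A ∈ Ystar,
        (s (csmul γ A) : Measure (X × NonemptyCompacts X)) =
          (s A : Measure (X × NonemptyCompacts X)).map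
            (fun q => (γ • q.1, csmul γ q.2))) ∧
      (∀ A ∈ Ystar,
        (s A : Measure (X × NonemptyCompacts X)).map Prod.snd =
          Measure.dirac A ∧
        (s A : Measure (X × NonemptyCompacts X)) Xstar = 1) := by
  classical
  have hπm : Measurable π := hc.measurable
  have hYstarclosed : IsClosed Ystar := by rw [hYstar]; exact isClosed_closure
  -- each λ_y gives full mass to the fiber over y
  have H3 : ∀ y : Y, (lam y : Measure X) (π ⁻¹' {y}) = 1 := by
    intro y
    have h1 : (lam y : Measure X) (π ⁻¹' {y}) = ((lam y : Measure X).map π) {y} :=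
      (Measure.map_apply hπm (measurableSet_singleton y)).symm
    rw [h1, hsec y, Measure.dirac_apply_of_mem (Set.mem_singleton y)]
  -- θ A equals π x for any x ∈ A, for A ∈ Ystar
  have H1 : ∀ A ∈ Ystar, ∀ x ∈ (A : Set X), θ A = π x := by
    intro A hA x hx
    have := hθ A hA hx
    rw [Set.mem_preimage, Set.mem_singleton_iff] at this
    exact this.symm
  -- θ is continuous on Ystar
  have H2 : ContinuousOn θ Ystar := by
    intro A hA
    rw [Metric.continuousWithinAt_iff]
    intro ε hε
    obtain ⟨δ, hδpos, hδ⟩ := Metric.uniformContinuous_iff.mp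
      (CompactSpace.uniformContinuous_of_continuous hc) ε hε
    refine ⟨δ, hδpos, fun B hB hdist => ?_⟩
    obtain ⟨x₀, hx₀⟩ := A.nonempty
    rw [NonemptyCompacts.dist_eq] at hdist
    obtain ⟨x, hx, hxx₀⟩ := exists_dist_lt_of_hausdorffDist_lt' hx₀ hdist
      (hausdorffEdist_ne_top_aux B A)
    rw [H1 A hA x₀ hx₀, H1 B hB x hx]
    exact hδ hxx₀
  have hfibY₀ : ∀ y ∈ Y₀, fib y ∈ Ystar := fun y hy => by
    rw [hYstar]; exact subset_closure (Set.mem_image_of_mem fib hy)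
  have H4 : ∀ y ∈ Y₀, θ (fib y) = y := by
    intro y hy
    obtain ⟨x, hx⟩ := (fib y).nonempty
    have hπx : π x = y := by
      have h := hx; rw [hfib y] at h; exact h
    rw [H1 (fib y) (hfibY₀ y hy) x hx, hπx]
  -- the key lemma: λ_{θ A} (A) = 1 for A ∈ Ystar
  have H5 : ∀ A ∈ Ystar, (lam (θ A) : Measure X) (A : Set X) = 1 := by
    intro A hA
    have hAmem : A ∈ closure (fib '' Y₀) := by rwa [hYstar] at hA
    obtain ⟨u, hu_mem, hu_tend⟩ := mem_closure_iff_seq_limit.mp hAmem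
    have hu_star : ∀ n, u n ∈ Ystar := fun n => by
      rw [hYstar]; exact subset_closure (hu_mem n)
    choose yseq hy₀ hyfib using hu_mem
    have hθu : ∀ n, θ (u n) = yseq n := fun n => by
      rw [← hyfib n]; exact H4 _ (hy₀ n)
    have hmeas1 : ∀ n, (lam (θ (u n)) : Measure X) ((u n : Set X)) = 1 := by
      intro n; rw [hθu n, ← hyfib n, hfib]; exact H3 _
    have hθ_tend : Tendsto (fun n => θ (u n)) atTop (𝓝 (θ A)) :=
      (H2 A hA).tendsto.comp
        (tendsto_nhdsWithin_of_tendsto_nhds_of_eventually_within u hu_tend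
          (Eventually.of_forall hu_star))
    have hlam_tend : Tendsto (fun n => lam (θ (u n))) atTop (𝓝 (lam (θ A))) :=
      (hlam.tendsto (θ A)).comp hθ_tend
    have hthick : ∀ ε : ℝ, 0 < ε →
        (lam (θ A) : Measure X) (cthickening ε (A : Set X)) = 1 := by
      intro ε hε
      have hev : ∀ᶠ n in atTop,
          (lam (θ (u n)) : Measure X) (cthickening ε (A : Set X)) = 1 := by
        filter_upwards [Metric.tendsto_nhds.mp hu_tend ε hε] with n hn
        have hsub : (u n : Set X) ⊆ cthickening ε (A : Set X) := by
          intro x hx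
          rw [NonemptyCompacts.dist_eq] at hn
          obtain ⟨y, hy, hxy⟩ := exists_dist_lt_of_hausdorffDist_lt hx hn
            (hausdorffEdist_ne_top_aux (u n) A)
          exact mem_cthickening_of_dist_le x y ε _ hy hxy.le
        refine le_antisymm prob_le_one ?_
        rw [← hmeas1 n]
        exact measure_mono hsub
      have hlimsup := ProbabilityMeasure.limsup_measure_closed_le_of_tendsto hlam_tend
        (isClosed_cthickening (δ := ε) (E := (A : Set X)))
      have hone : limsup (fun n => (lam (θ (u n)) : Measure X)
          (cthickening ε (A : Set X))) atTop = 1 := by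
        rw [limsup_congr hev, limsup_const]
      rw [hone] at hlimsup
      exact le_antisymm prob_le_one hlimsup
    have htend2 : Tendsto
        (fun ε : ℝ => (lam (θ A) : Measure X) (cthickening ε (A : Set X)))
        (𝓝[>] 0) (𝓝 ((lam (θ A) : Measure X) (A : Set X))) :=
      (tendsto_measure_cthickening_of_isClosed
        ⟨1, one_pos, measure_ne_top _ _⟩ A.isCompact.isClosed).mono_left nhdsWithin_le_nhds
    have htend3 : Tendsto
        (fun ε : ℝ => (lam (θ A) : Measure X) (cthickening ε (A : Set X)))
        (𝓝[>] 0) (𝓝 1) := by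
      apply Tendsto.congr' _ tendsto_const_nhds
      filter_upwards [self_mem_nhdsWithin] with ε hε
      exact (hthick ε hε).symm
    exact tendsto_nhds_unique htend2 htend3
  -- part 1
  have part1 : ∀ A ∈ Ystar, msupport (lam (θ A) : Measure X) ⊆ (A : Set X) := by
    intro A hA x hx
    by_contra hxA
    have hopen : IsOpen ((A : Set X)ᶜ) := A.isCompact.isClosed.isOpen_compl
    have h0 : (lam (θ A) : Measure X) ((A : Set X)ᶜ) = 0 := by
      rw [measure_compl A.isCompact.isClosed.measurableSet (measure_ne_top _ _),
        H5 A hA, measure_univ, tsub_self]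
    have := hx _ hopen hxA
    rw [h0] at this
    exact lt_irrefl 0 this
  refine ⟨part1, ?_⟩
  -- the section
  let s : NonemptyCompacts X → ProbabilityMeasure (X × NonemptyCompacts X) :=
    fun A => ⟨(lam (θ A) : Measure X).prod (Measure.dirac A), inferInstance⟩
  have hs_def : ∀ A, (s A : Measure (X × NonemptyCompacts X)) =
      (lam (θ A) : Measure X).prod (Measure.dirac A) := fun A => rfl
  -- integration against the section
  have hint : ∀ (B : NonemptyCompacts X) (f : (X × NonemptyCompacts X) →ᵇ ℝ),
      ∫ q, f q ∂(s B : Measure (X × NonemptyCompacts X)) =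
        ∫ x, f (x, B) ∂(lam (θ B) : Measure X) := by
    intro B f
    rw [hs_def, Measure.prod_dirac]
    rw [integral_map (measurable_prodMk_right).aemeasurable
      f.continuous.aestronglyMeasurable]
  -- continuity of the section on Ystar
  have hcont : ContinuousOn s Ystar := by
    intro A hA
    have hμcw : Tendsto (fun B => lam (θ B)) (𝓝[Ystar] A) (𝓝 (lam (θ A))) :=
      (hlam.tendsto _).comp (H2 A hA).tendsto
    rw [ContinuousWithinAt, ProbabilityMeasure.tendsto_iff_forall_integral_tendsto]
    intro f
    simp_rw [hint]
    set g : X →ᵇ ℝ :=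
      f.compContinuous ⟨fun x => (x, A), continuous_id.prodMk continuous_const⟩ with hg
    have h2 : Tendsto (fun B => ∫ x, g x ∂(lam (θ B) : Measure X)) (𝓝[Ystar] A)
        (𝓝 (∫ x, g x ∂(lam (θ A) : Measure X))) :=
      ProbabilityMeasure.tendsto_iff_forall_integral_tendsto.mp hμcw g
    have h1 : Tendsto (fun B => ∫ x, f (x, B) ∂(lam (θ B) : Measure X) -
        ∫ x, g x ∂(lam (θ B) : Measure X)) (𝓝[Ystar] A) (𝓝 0) := by
      rw [NormedAddCommGroup.tendsto_nhds_zero]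
      intro ε hε
      obtain ⟨δ, hδpos, hδ⟩ := Metric.uniformContinuous_iff.mp
        (CompactSpace.uniformContinuous_of_continuous f.continuous) (ε / 2) (by positivity)
      filter_upwards [mem_nhdsWithin_of_mem_nhds (Metric.ball_mem_nhds A hδpos)] with B hB
      set gB : X →ᵇ ℝ :=
        f.compContinuous ⟨fun x => (x, B), continuous_id.prodMk continuous_const⟩ with hgB
      have hpt : ∀ x : X, ‖gB x - g x‖ ≤ ε / 2 := by
        intro x
        have hd : dist ((x, B) : X × NonemptyCompacts X) (x, A) < δ := by
          rw [Prod.dist_eq]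
          simp only [dist_self]
          exact max_lt hδpos (Metric.mem_ball.mp hB)
        have := hδ hd
        rw [Real.dist_eq] at this
        exact this.le
      have heqint : ∫ x, f (x, B) ∂(lam (θ B) : Measure X) =
          ∫ x, gB x ∂(lam (θ B) : Measure X) := rfl
      rw [heqint, ← integral_sub (gB.integrable _) (g.integrable _)]
      calc ‖∫ x, (gB x - g x) ∂(lam (θ B) : Measure X)‖
          ≤ (ε / 2) * ((lam (θ B) : Measure X) Set.univ).toReal :=
            norm_integral_le_of_norm_le_const (Filter.Eventually.of_forall hpt)
        _ < ε := by rw [measure_univ]; simp; linarith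
    have := h1.add h2
    rw [zero_add] at this
    refine this.congr (fun B => ?_)
    exact sub_add_cancel _ _
  -- equivariance facts
  have E2 : ∀ (γ : Γ) (y : Y), csmul γ (fib y) = fib (γ • y) := by
    intro γ y
    apply NonemptyCompacts.ext
    rw [csmul_coe, hfib, hfib]
    ext x
    constructor
    · rintro ⟨z, hz, rfl⟩
      rw [Set.mem_preimage, Set.mem_singleton_iff] at hz ⊢
      rw [heq, hz]
    · intro hx
      rw [Set.mem_preimage, Set.mem_singleton_iff] at hx
      refine ⟨γ⁻¹ • x, ?_, smul_inv_smul γ x⟩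
      rw [Set.mem_preimage, Set.mem_singleton_iff, heq, hx, inv_smul_smul]
  have E3 : ∀ (γ : Γ), ∀ y ∈ Y₀, γ • y ∈ Y₀ := by
    intro γ y hy
    rw [hY₀] at hy ⊢
    rw [Set.mem_setOf_eq] at hy ⊢
    have hrw : fib = (csmul γ) ∘ fib ∘ (fun z : Y => γ⁻¹ • z) := by
      funext z
      simp only [Function.comp_apply]
      rw [E2, smul_inv_smul]
    rw [hrw]
    apply ContinuousAt.comp
    · exact (csmul_continuous γ).continuousAt
    apply ContinuousAt.comp
    · show ContinuousAt fib (γ⁻¹ • γ • y)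
      rw [inv_smul_smul]
      exact hy
    · exact (continuous_const_smul γ⁻¹).continuousAt
  have E4 : ∀ (γ : Γ), ∀ A ∈ Ystar, csmul γ A ∈ Ystar := by
    intro γ A hA
    rw [hYstar] at hA ⊢
    have h1 : csmul γ A ∈ csmul γ '' closure (fib '' Y₀) := Set.mem_image_of_mem _ hA
    have h2 : csmul γ '' closure (fib '' Y₀) ⊆ closure (csmul γ '' (fib '' Y₀)) :=
      image_closure_subset_closure_image (csmul_continuous γ)
    have h3 : csmul γ '' (fib '' Y₀) ⊆ fib '' Y₀ := by
      rintro _ ⟨_, ⟨y, hy, rfl⟩, rfl⟩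
      exact ⟨γ • y, E3 γ y hy, (E2 γ y).symm⟩
    exact closure_mono h3 (h2 h1)
  have E5 : ∀ (γ : Γ), ∀ A ∈ Ystar, θ (csmul γ A) = γ • θ A := by
    intro γ A hA
    obtain ⟨x, hx⟩ := A.nonempty
    have hx' : γ • x ∈ (csmul γ A : Set X) := Set.mem_image_of_mem _ hx
    rw [H1 A hA x hx, H1 (csmul γ A) (E4 γ A hA) (γ • x) hx']
    exact heq γ x
  have hequiv : ∀ (γ : Γ), ∀ A ∈ Ystar,
      (s (csmul γ A) : Measure (X × NonemptyCompacts X)) =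
        (s A : Measure (X × NonemptyCompacts X)).map
          (fun q => (γ • q.1, csmul γ q.2)) := by
    intro γ A hA
    rw [hs_def, hs_def, E5 γ A hA, hlameq]
    rw [← Measure.map_dirac' (csmul_continuous γ).measurable A]
    rw [Measure.map_prod_map _ _ ((continuous_const_smul γ).measurable)
      (csmul_continuous γ).measurable]
    rfl
  refine ⟨s, hs_def, hcont, hequiv, ?_⟩
  intro A hA
  constructor
  · rw [hs_def, Measure.map_snd_prod, measure_univ, one_smul]
  · rw [hs_def, Measure.prod_dirac]
    have hXcl : IsClosed Xstar := by
      rw [hXstar]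
      have hrw : {q : X × NonemptyCompacts X | q.2 ∈ Ystar ∧ q.1 ∈ (q.2 : Set X)} =
          (Prod.snd ⁻¹' Ystar) ∩ {q : X × NonemptyCompacts X | q.1 ∈ (q.2 : Set X)} := rfl
      rw [hrw]
      exact (hYstarclosed.preimage continuous_snd).inter isClosed_memSet
    rw [Measure.map_apply measurable_prodMk_right hXcl.measurableSet]
    have hpre : (fun x : X => (x, A)) ⁻¹' Xstar = (A : Set X) := by
      ext x
      simp [hXstar, hA]
    rw [hpre]
    exact H5 A hA
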